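/- Let f : [0,1] → ℝ be of bounded variation and let X ⊆ [0,1] be a set that is a union of at most n+1 pairwise disjoint subintervals. Then Var(f·𝟙_X) ≤ Var(f) + 2(n+1)·sup_{x}|f(x)|. -/

import Mathlib

open MeasureTheory Set

/-! Passing from `f` to `𝟙_X f` changes an increment `f (u (i+1)) - f (u i)` of a monotone
partition only when exactly one of `u i`, `u (i+1)` lies in `X`, and then by at most `sup |f|`.
Since the partition is monotone and the intervals are order-connected, it enters each interval at
most once and leaves it at most once, so at most `2 (n+1)` increments change. -/

open Finset in
theorem Finset.card_le_card_of_lt_imp_ne {β ι : Type*} [LinearOrder β] [Fintype ι]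
    {t : Finset β} (φ : β → ι) (h : ∀ i ∈ t, ∀ i' ∈ t, i < i' → φ i ≠ φ i') :
    #t ≤ Fintype.card ι := by
  refine card_le_card_of_injOn φ (fun _ _ => mem_coe.2 (mem_univ _)) fun i hi i' hi' hφ => ?_
  by_contra hne
  rcases lt_or_gt_of_ne hne with hlt | hlt
  exacts [h i hi i' hi' hlt hφ, h i' hi' i hi hlt hφ.symm]

section Crossings

open Finset
open scoped Classical

variable {α ι : Type*} [Preorder α] [Fintype ι] {S : ι → Set α} {u : ℕ → α}

theorem card_filter_entries_le (hS : ∀ j, (S j).OrdConnected) (hu : Monotone u)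
    (t : Finset ℕ) :
    #{i ∈ t | u i ∉ ⋃ j, S j ∧ u (i + 1) ∈ ⋃ j, S j} ≤ Fintype.card ι := by
  have hmem : ∀ i ∈ {i ∈ t | u i ∉ ⋃ j, S j ∧ u (i + 1) ∈ ⋃ j, S j}, ∃ j, u (i + 1) ∈ S j :=
    fun i hi => mem_iUnion.1 (mem_filter.1 hi).2.2
  cases isEmpty_or_nonempty ι
  · simp
  choose! φ hφ using hmem
  refine card_le_card_of_lt_imp_ne φ fun i hi i' hi' hlt hφeq => ?_
  have hnot : u i' ∉ ⋃ j, S j := (mem_filter.1 hi').2.1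
  have hbetween : u i' ∈ Icc (u (i + 1)) (u (i' + 1)) := ⟨hu hlt, hu i'.le_succ⟩
  exact hnot (mem_iUnion.2 ⟨φ i, (hS _).out (hφ i hi) (hφeq ▸ hφ i' hi') hbetween⟩)

theorem card_filter_exits_le (hS : ∀ j, (S j).OrdConnected) (hu : Monotone u)
    (t : Finset ℕ) :
    #{i ∈ t | u i ∈ ⋃ j, S j ∧ u (i + 1) ∉ ⋃ j, S j} ≤ Fintype.card ι := by
  have hmem : ∀ i ∈ {i ∈ t | u i ∈ ⋃ j, S j ∧ u (i + 1) ∉ ⋃ j, S j}, ∃ j, u i ∈ S j :=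
    fun i hi => mem_iUnion.1 (mem_filter.1 hi).2.1
  cases isEmpty_or_nonempty ι
  · simp
  choose! φ hφ using hmem
  refine card_le_card_of_lt_imp_ne φ fun i hi i' hi' hlt hφeq => ?_
  have hnot : u (i + 1) ∉ ⋃ j, S j := (mem_filter.1 hi).2.2
  have hbetween : u (i + 1) ∈ Icc (u i) (u i') := ⟨hu i.le_succ, hu hlt⟩
  exact hnot (mem_iUnion.2 ⟨φ i, (hS _).out (hφ i hi) (hφeq ▸ hφ i' hi') hbetween⟩)

theorem card_filter_crossings_le (hS : ∀ j, (S j).OrdConnected) (hu : Monotone u)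
    (t : Finset ℕ) :
    #{i ∈ t | ¬(u (i + 1) ∈ ⋃ j, S j ↔ u i ∈ ⋃ j, S j)} ≤ 2 * Fintype.card ι := by
  calc #{i ∈ t | ¬(u (i + 1) ∈ ⋃ j, S j ↔ u i ∈ ⋃ j, S j)}
      ≤ #({i ∈ t | u i ∉ ⋃ j, S j ∧ u (i + 1) ∈ ⋃ j, S j} ∪
          {i ∈ t | u i ∈ ⋃ j, S j ∧ u (i + 1) ∉ ⋃ j, S j}) := by
        refine card_le_card fun i => ?_
        simp only [mem_filter, Finset.mem_union]
        tauto
    _ ≤ Fintype.card ι + Fintype.card ι :=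
        (Finset.card_union_le _ _).trans (add_le_add (card_filter_entries_le hS hu t)
          (card_filter_exits_le hS hu t))
    _ = 2 * Fintype.card ι := (two_mul _).symm

end Crossings

open scoped Classical in
theorem edist_indicator_le {α E : Type*} [SeminormedAddCommGroup E] {f : α → E} {X : Set α}
    {C : ENNReal} (hC : ∀ x ∈ X, ‖f x‖ₑ ≤ C) (x y : α) :
    edist (X.indicator f x) (X.indicator f y) ≤
      edist (f x) (f y) + if ¬(x ∈ X ↔ y ∈ X) then C else 0 := by
  by_cases hx : x ∈ X <;> by_cases hy : y ∈ X
  · simp [hx, hy]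
  · simpa [hx, hy] using le_add_left (hC x hx)
  · simpa [hx, hy, edist_comm (0 : E)] using le_add_left (hC y hy)
  · simp [hx, hy]

open Finset in
open scoped Classical in
theorem eVariationOn_indicator_iUnion_le {α E ι : Type*} [LinearOrder α]
    [SeminormedAddCommGroup E] [Fintype ι] (f : α → E) (s : Set α) {S : ι → Set α}
    (hS : ∀ j, (S j).OrdConnected) {C : ENNReal} (hC : ∀ x ∈ ⋃ j, S j, ‖f x‖ₑ ≤ C) :
    eVariationOn ((⋃ j, S j).indicator f) s ≤
      eVariationOn f s + ((2 * Fintype.card ι : ℕ) : ENNReal) * C := by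
  refine iSup_le fun ⟨m, u, hu, us⟩ => ?_
  calc ∑ i ∈ range m, edist ((⋃ j, S j).indicator f (u (i + 1)))
        ((⋃ j, S j).indicator f (u i))
      ≤ ∑ i ∈ range m, (edist (f (u (i + 1))) (f (u i)) +
          if ¬(u (i + 1) ∈ ⋃ j, S j ↔ u i ∈ ⋃ j, S j) then C else 0) :=
        sum_le_sum fun i _ => edist_indicator_le hC _ _
    _ = ∑ i ∈ range m, edist (f (u (i + 1))) (f (u i)) +
          #{i ∈ range m | ¬(u (i + 1) ∈ ⋃ j, S j ↔ u i ∈ ⋃ j, S j)} * C := by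
        rw [sum_add_distrib, ← sum_filter, sum_const, nsmul_eq_mul]
    _ ≤ eVariationOn f s + ((2 * Fintype.card ι : ℕ) : ENNReal) * C := by
        gcongr
        · exact eVariationOn.sum_le hu us
        · exact_mod_cast card_filter_crossings_le hS hu _

theorem BoundedVariationOn.isBounded_image {α E : Type*} [LinearOrder α] [PseudoMetricSpace E]
    {f : α → E} {s : Set α} (hf : BoundedVariationOn f s) : Bornology.IsBounded (f '' s) := by
  refine Metric.isBounded_iff_ediam_ne_top.2 (ne_top_of_le_ne_top hf (Metric.ediam_le ?_))
  rintro _ ⟨x, hx, rfl⟩ _ ⟨y, hy, rfl⟩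
  exact eVariationOn.edist_le f hx hy

theorem le_ciSup₂_of_bddAbove_image {α β : Type*} [ConditionallyCompleteLattice α] {g : β → α}
    {s : Set β} (H : BddAbove (g '' s)) {x : β} (hx : x ∈ s) : g x ≤ ⨆ y ∈ s, g y := by
  refine le_ciSup₂ (f := fun y (_ : y ∈ s) => g y) (H.mono ?_) x hx
  rintro _ ⟨_, ⟨y, rfl⟩, ⟨hy, rfl⟩⟩
  exact mem_image_of_mem g hy

theorem variation_indicator_union_intervals_le_general
    (f : ℝ → ℝ) (hf : BoundedVariationOn f (Set.Icc 0 1))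
    (n : ℕ) (a b : Fin (n + 1) → ℝ) (X : Set ℝ)
    (hX : X = ⋃ i, Set.Icc (a i) (b i))
    (hsub : X ⊆ Set.Icc (0:ℝ) 1) :
    eVariationOn (X.indicator f) (Set.Icc 0 1) ≤
      eVariationOn f (Set.Icc 0 1) +
        ((2 * (n + 1) : ℕ) : ENNReal) * ENNReal.ofReal (⨆ x ∈ Set.Icc (0:ℝ) 1, |f x|) := by
  obtain ⟨C, hC⟩ := isBounded_iff_forall_norm_le.1 hf.isBounded_image
  have hbdd : BddAbove ((fun x => |f x|) '' Icc 0 1) := by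
    refine ⟨C, ?_⟩
    rintro _ ⟨x, hx, rfl⟩
    exact hC _ (mem_image_of_mem f hx)
  have hbound : ∀ x ∈ X, ‖f x‖ₑ ≤ ENNReal.ofReal (⨆ x ∈ Icc (0:ℝ) 1, |f x|) := fun x hx => by
    rw [Real.enorm_eq_ofReal_abs]
    exact ENNReal.ofReal_le_ofReal (le_ciSup₂_of_bddAbove_image hbdd (hsub hx))
  subst hX
  simpa using eVariationOn_indicator_iUnion_le f (Icc 0 1) (fun _ => ordConnected_Icc) hbound

/-- For `f` of bounded variation on `[0,1]` and `X ⊆ [0,1]` a union of at most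
`n+1` pairwise disjoint subintervals, `Var(f·𝟙_X) ≤ Var(f) + 2(n+1)·sup|f|`. -/
theorem variation_indicator_union_intervals_le
    (f : ℝ → ℝ) (hf : BoundedVariationOn f (Set.Icc 0 1))
    (n : ℕ) (a b : Fin (n + 1) → ℝ) (X : Set ℝ)
    (hX : X = ⋃ i, Set.Icc (a i) (b i))
    (hdisj : Pairwise fun i j => Disjoint (Set.Icc (a i) (b i)) (Set.Icc (a j) (b j)))
    (hsub : X ⊆ Set.Icc (0:ℝ) 1) :
    eVariationOn (X.indicator f) (Set.Icc 0 1) ≤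
      eVariationOn f (Set.Icc 0 1) +
        ((2 * (n + 1) : ℕ) : ENNReal) * ENNReal.ofReal (⨆ x ∈ Set.Icc (0:ℝ) 1, |f x|) :=
  variation_indicator_union_intervals_le_general f hf n a b X hX hsub
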